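/- arXiv:2208.06847 — 3 statements merged into one kernel-verified Lean document; each statement's English description precedes it below -/
import Mathlib

section
/- For every natural number n, the sum over i from 0 to floor(n/3) of binomial(n, i) is at most 1.89^n. -/
theorem sum_binom_le (n : ℕ) :
    (∑ i ∈ Finset.range (n / 3 + 1), (n.choose i : ℝ)) ≤ 1.89 ^ n := by
  set k := n / 3 with hk
  have hkn : k + 1 ≤ n + 1 := Nat.succ_le_succ (Nat.div_le_self n 3)
  have h3k : 3 * k ≤ n := by
    have := Nat.div_mul_le_self n 3
    omega
  have h1 : (∑ i ∈ Finset.range (k + 1), (n.choose i : ℝ)) ≤ 2 ^ k * (3 / 2) ^ n := by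
    have hstep : (∑ i ∈ Finset.range (k + 1), (n.choose i : ℝ))
        ≤ ∑ i ∈ Finset.range (k + 1), 2 ^ k * ((n.choose i : ℝ) * (1 / 2) ^ i) := by
      apply Finset.sum_le_sum
      intro i hi
      have hik : i ≤ k := Nat.lt_succ_iff.mp (Finset.mem_range.mp hi)
      have h2i : (2 : ℝ) ^ i ≤ 2 ^ k := pow_le_pow_right₀ one_le_two hik
      have hpos : (0 : ℝ) < 2 ^ i := by positivity
      have hone : (1 : ℝ) ≤ 2 ^ k * (1 / 2) ^ i := by
        rw [one_div, inv_pow, ← div_eq_mul_inv]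
        exact (one_le_div hpos).mpr h2i
      have hc : (0 : ℝ) ≤ (n.choose i : ℝ) := Nat.cast_nonneg _
      calc (n.choose i : ℝ) = (n.choose i : ℝ) * 1 := by ring
        _ ≤ (n.choose i : ℝ) * (2 ^ k * (1 / 2) ^ i) := by
            exact mul_le_mul_of_nonneg_left hone hc
        _ = 2 ^ k * ((n.choose i : ℝ) * (1 / 2) ^ i) := by ring
    have hsub : (∑ i ∈ Finset.range (k + 1), (n.choose i : ℝ) * (1 / 2) ^ i)
        ≤ ∑ i ∈ Finset.range (n + 1), (n.choose i : ℝ) * (1 / 2) ^ i := by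
      apply Finset.sum_le_sum_of_subset_of_nonneg (Finset.range_subset_range.mpr hkn)
      intro i _ _
      positivity
    have hbin : (∑ i ∈ Finset.range (n + 1), (n.choose i : ℝ) * (1 / 2) ^ i)
        = (3 / 2) ^ n := by
      have := add_pow (1 / 2 : ℝ) 1 n
      simp only [one_pow, mul_one] at this
      rw [show (3 / 2 : ℝ) = 1 / 2 + 1 by norm_num, this]
      apply Finset.sum_congr rfl
      intro i _
      ring
    calc (∑ i ∈ Finset.range (k + 1), (n.choose i : ℝ))
        ≤ ∑ i ∈ Finset.range (k + 1), 2 ^ k * ((n.choose i : ℝ) * (1 / 2) ^ i) := hstep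
      _ = 2 ^ k * ∑ i ∈ Finset.range (k + 1), (n.choose i : ℝ) * (1 / 2) ^ i := by
          rw [Finset.mul_sum]
      _ ≤ 2 ^ k * ∑ i ∈ Finset.range (n + 1), (n.choose i : ℝ) * (1 / 2) ^ i := by
          apply mul_le_mul_of_nonneg_left hsub (by positivity)
      _ = 2 ^ k * (3 / 2) ^ n := by rw [hbin]
  have h2 : (2 : ℝ) ^ k * (3 / 2) ^ n ≤ 1.89 ^ n := by
    have hc : ((2 : ℝ) ^ k * (3 / 2) ^ n) ^ 3 ≤ ((1.89 : ℝ) ^ n) ^ 3 := by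
      have e1 : ((2 : ℝ) ^ k * (3 / 2) ^ n) ^ 3 = 2 ^ (3 * k) * (27 / 8 : ℝ) ^ n := by
        rw [mul_pow, ← pow_mul, ← pow_mul, Nat.mul_comm k 3, Nat.mul_comm n 3,
          pow_mul ((3:ℝ)/2) 3 n]
        norm_num
      have e2 : (2 : ℝ) ^ (3 * k) ≤ 2 ^ n := pow_le_pow_right₀ one_le_two h3k
      have e3 : (2 : ℝ) ^ n * (27 / 8 : ℝ) ^ n = (27 / 4 : ℝ) ^ n := by
        rw [← mul_pow]; norm_num
      have e4 : ((27 : ℝ) / 4) ^ n ≤ ((1.89 : ℝ) ^ 3) ^ n := by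
        apply pow_le_pow_left₀ (by norm_num)
        norm_num
      calc ((2 : ℝ) ^ k * (3 / 2) ^ n) ^ 3 = 2 ^ (3 * k) * (27 / 8 : ℝ) ^ n := e1
        _ ≤ 2 ^ n * (27 / 8 : ℝ) ^ n := by
            apply mul_le_mul_of_nonneg_right e2 (by positivity)
        _ = (27 / 4 : ℝ) ^ n := e3
        _ ≤ ((1.89 : ℝ) ^ 3) ^ n := e4
        _ = ((1.89 : ℝ) ^ n) ^ 3 := by rw [← pow_mul, ← pow_mul, Nat.mul_comm]
    exact le_of_pow_le_pow_left₀ (by norm_num) (by positivity) hc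
  exact h1.trans h2
end

section
/- Let G be a connected graph on n vertices with shortest-path metric d, and fix k ≤ n such that G has no dominating set of size at most k−1. Then G has a dominating set of size k if and only if the minimum over all partitions {X_1,...,X_k} of V(G) with distinct centers c_i ∈ X_i of ∑_i ∑_{x ∈ X_i} d(c_i, x) equals n − k. -/
theorem domset_iff_min_cost {V : Type*} [Fintype V] [DecidableEq V]
    (G : SimpleGraph V) (hG : G.Connected) (n k : ℕ)
    (hn : Fintype.card V = n) (hk : k ≤ n) (hk0 : 1 ≤ k)
    (hnodom : ∀ S : Finset V, S.card ≤ k - 1 →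
      ¬ (∀ v : V, ∃ u ∈ S, u = v ∨ G.Adj u v)) :
    (∃ S : Finset V, S.card = k ∧ ∀ v : V, ∃ u ∈ S, u = v ∨ G.Adj u v) ↔
    IsLeast { r : ℕ | ∃ (c : Fin k → V) (X : Fin k → Finset V),
        Function.Injective c ∧ (∀ i, c i ∈ X i) ∧
        (∀ i j, i ≠ j → Disjoint (X i) (X j)) ∧ (∀ v : V, ∃ i, v ∈ X i) ∧
        r = ∑ i, ∑ x ∈ X i, G.dist (c i) x } (n - k) := by
  classical
  -- general lower bound: every clustering has cost ≥ n - k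
  have lower : ∀ r ∈ { r : ℕ | ∃ (c : Fin k → V) (X : Fin k → Finset V),
        Function.Injective c ∧ (∀ i, c i ∈ X i) ∧
        (∀ i j, i ≠ j → Disjoint (X i) (X j)) ∧ (∀ v : V, ∃ i, v ∈ X i) ∧
        r = ∑ i, ∑ x ∈ X i, G.dist (c i) x }, n - k ≤ r := by
    rintro r ⟨c, X, hinj, hcmem, hdisj, hcov, rfl⟩
    have hcard : ∑ i, (X i).card = n := by
      rw [← hn, ← Finset.card_biUnion (fun i _ j _ hij => hdisj i j hij)]
      congr 1
      apply Finset.eq_univ_iff_forall.mpr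
      intro v
      obtain ⟨i, hi⟩ := hcov v
      exact Finset.mem_biUnion.mpr ⟨i, Finset.mem_univ i, hi⟩
    have hle : ∀ i : Fin k, (X i).card - 1 ≤ ∑ x ∈ X i, G.dist (c i) x := by
      intro i
      rw [← Finset.sum_erase (X i) (SimpleGraph.dist_self : G.dist (c i) (c i) = 0),
        ← Finset.card_erase_of_mem (hcmem i)]
      calc ((X i).erase (c i)).card = ∑ _x ∈ (X i).erase (c i), 1 := by simp
        _ ≤ ∑ x ∈ (X i).erase (c i), G.dist (c i) x := by
            apply Finset.sum_le_sum
            intro x hx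
            exact hG.pos_dist_of_ne (Ne.symm (Finset.ne_of_mem_erase hx))
    have h1 : ∑ i : Fin k, ((X i).card - 1 + 1) = n := by
      rw [Finset.sum_congr rfl (fun i _ =>
        Nat.sub_add_cancel (Finset.card_pos.mpr ⟨c i, hcmem i⟩))]
      exact hcard
    rw [Finset.sum_add_distrib] at h1
    simp only [Finset.sum_const, Finset.card_univ, Fintype.card_fin, smul_eq_mul,
      mul_one] at h1
    have h2 : n - k ≤ ∑ i : Fin k, ((X i).card - 1) := by omega
    exact h2.trans (Finset.sum_le_sum fun i _ => hle i)
  constructor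
  · rintro ⟨S, hScard, hSdom⟩
    constructor
    · -- build a clustering of cost n - k
      have e : Fin k ≃ {x // x ∈ S} := (Fintype.equivFinOfCardEq (by simp [hScard])).symm
      have hdom' : ∀ v : V, ∃ u, ∃ h : u ∈ S, (v ∈ S → u = v) ∧ (v ∉ S → G.Adj u v) := by
        intro v
        by_cases hv : v ∈ S
        · exact ⟨v, hv, fun _ => rfl, fun h => absurd hv h⟩
        · obtain ⟨u, hu, hcase⟩ := hSdom v
          rcases hcase with rfl | hadj
          · exact absurd hu hv
          · exact ⟨u, hu, fun h => absurd h hv, fun _ => hadj⟩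
      choose u hu h1 h2 using hdom'
      set f : V → Fin k := fun v => e.symm ⟨u v, hu v⟩ with hf
      set c : Fin k → V := fun i => (e i : V) with hc
      set X : Fin k → Finset V := fun i => Finset.univ.filter (fun v => f v = i) with hX
      have hcS : ∀ i, c i ∈ S := fun i => (e i).2
      have hfc : ∀ i, f (c i) = i := by
        intro i
        have : u (c i) = c i := h1 _ (hcS i)
        simp only [hf]
        rw [show (⟨u (c i), hu (c i)⟩ : {x // x ∈ S}) = e i from Subtype.ext this]
        simp
      refine ⟨c, X, ?_, ?_, ?_, ?_, ?_⟩
      · intro i j hij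
        exact e.injective (Subtype.ext hij)
      · intro i; simp [hX, hfc i]
      · intro i j hij
        simp only [hX]
        apply Finset.disjoint_filter_filter'
        exact Set.disjoint_left.mpr (fun v hv hv' => hij (hv ▸ hv'))
      · intro v; exact ⟨f v, by simp [hX]⟩
      · have hfib : ∑ i, ∑ x ∈ X i, G.dist (c i) x
            = ∑ x : V, G.dist (c (f x)) x := by
          rw [← Finset.sum_fiberwise_of_maps_to (fun x _ => Finset.mem_univ (f x))
            (fun x => G.dist (c (f x)) x)]
          apply Finset.sum_congr rfl
          intro i _
          apply Finset.sum_congr rfl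
          intro x hx
          simp only [hX, Finset.mem_filter] at hx
          rw [hx.2]
        have hval : ∀ x : V, G.dist (c (f x)) x = if x ∈ S then 0 else 1 := by
          intro x
          have hcfx : c (f x) = u x := by simp [hc, hf]
          by_cases hx : x ∈ S
          · simp [hx, hcfx, h1 x hx, SimpleGraph.dist_self]
          · simp only [hx, if_false, hcfx]
            exact SimpleGraph.dist_eq_one_iff_adj.mpr (h2 x hx)
        rw [hfib]
        simp only [hval]
        rw [Finset.sum_ite]
        simp only [Finset.sum_const_zero, Finset.sum_const, smul_eq_mul, mul_one, zero_add]
        have hfilt : Finset.univ.filter (fun x => ¬ x ∈ S) = Sᶜ := by ext x; simp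
        rw [hfilt, Finset.card_compl, hScard, hn]
    · exact lower
  · rintro ⟨⟨c, X, hinj, hcmem, hdisj, hcov, heq⟩, -⟩
    refine ⟨Finset.image c Finset.univ, ?_, ?_⟩
    · rw [Finset.card_image_of_injective _ hinj, Finset.card_univ, Fintype.card_fin]
    · -- show domination using the equality case
      have hcard : ∑ i, (X i).card = n := by
        rw [← hn, ← Finset.card_biUnion (fun i _ j _ hij => hdisj i j hij)]
        congr 1
        apply Finset.eq_univ_iff_forall.mpr
        intro v
        obtain ⟨i, hi⟩ := hcov v
        exact Finset.mem_biUnion.mpr ⟨i, Finset.mem_univ i, hi⟩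
      set A : Fin k → Finset V := fun i => (X i).erase (c i) with hA
      have hT : ∑ i, ∑ x ∈ A i, G.dist (c i) x = n - k := by
        rw [← heq.symm]
        apply Finset.sum_congr rfl
        intro i _
        exact Finset.sum_erase _ SimpleGraph.dist_self
      have hAcard : ∑ i, (A i).card = n - k := by
        have h1 : ∑ i : Fin k, ((A i).card + 1) = n := by
          have h0 : ∀ i : Fin k, (A i).card + 1 = (X i).card := by
            intro i
            rw [hA]
            simp only
            rw [Finset.card_erase_of_mem (hcmem i)]
            exact Nat.sub_add_cancel (Finset.card_pos.mpr ⟨c i, hcmem i⟩)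
          rw [Finset.sum_congr rfl (fun i _ => h0 i), hcard]
        rw [Finset.sum_add_distrib] at h1
        simp only [Finset.sum_const, Finset.card_univ, Fintype.card_fin, smul_eq_mul,
          mul_one] at h1
        omega
      have hone : ∀ i : Fin k, ∀ x ∈ A i, G.dist (c i) x = 1 := by
        have hle : ∀ i ∈ (Finset.univ : Finset (Fin k)),
            (A i).card ≤ ∑ x ∈ A i, G.dist (c i) x := by
          intro i _
          calc (A i).card = ∑ _x ∈ A i, 1 := by simp
            _ ≤ ∑ x ∈ A i, G.dist (c i) x := Finset.sum_le_sum
                (fun x hx => hG.pos_dist_of_ne (Ne.symm (Finset.ne_of_mem_erase hx)))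
        have hsumeq : ∑ i, (A i).card = ∑ i, ∑ x ∈ A i, G.dist (c i) x := by
          rw [hAcard, hT]
        have hper := (Finset.sum_eq_sum_iff_of_le hle).mp hsumeq
        intro i x hx
        have hper_i := hper i (Finset.mem_univ i)
        have hle2 : ∀ x ∈ A i, 1 ≤ G.dist (c i) x :=
          fun x hx => hG.pos_dist_of_ne (Ne.symm (Finset.ne_of_mem_erase hx))
        have : ∑ x ∈ A i, (1 : ℕ) = ∑ x ∈ A i, G.dist (c i) x := by
          simpa using hper_i
        exact ((Finset.sum_eq_sum_iff_of_le hle2).mp this x hx).symm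
      intro v
      obtain ⟨i, hi⟩ := hcov v
      refine ⟨c i, Finset.mem_image_of_mem c (Finset.mem_univ i), ?_⟩
      by_cases hv : v = c i
      · exact Or.inl hv.symm
      · right
        have : v ∈ A i := Finset.mem_erase.mpr ⟨hv, hi⟩
        exact SimpleGraph.dist_eq_one_iff_adj.mp (hone i v this)
end

section
/- Let G be the auxiliary bipartite-style graph constructed from an instance of k-median with guessed parameters (k1, k2, k3) and guessed Type-3 center set C' of size k3, with s = n − k3 − 2k2 − k1 ≥ 0: vertex sets W (k3 blocks of s copies of each center), Y (the n − k3 non-center points), U_iso (k1 auxiliary vertices adjacent to all of Y), Z_fill (s(k3 − 1) filler vertices adjacent to all of W), edges within Y, and edges between Y and W. Then G has a perfect matching. -/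
/-- Vertices: W = `Fin (s*k3)` (s copies of each of the k3 guessed Type-3 centers),
Y = `Fin (k1 + 2*k2 + s)` (the n − k3 remaining points), U_iso = `Fin k1`,
Z_fill = `Fin (s*(k3-1))`. -/
abbrev AuxV (s k1 k2 k3 : ℕ) : Type :=
  Fin (s * k3) ⊕ (Fin (k1 + 2 * k2 + s) ⊕ (Fin k1 ⊕ Fin (s * (k3 - 1))))

/-- Adjacency: W–Y, Y–Y (distinct), U_iso–Y, Z_fill–W. -/
def auxAdj (s k1 k2 k3 : ℕ) : AuxV s k1 k2 k3 → AuxV s k1 k2 k3 → Prop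
  | Sum.inl _, Sum.inr (Sum.inl _) => True
  | Sum.inr (Sum.inl _), Sum.inl _ => True
  | Sum.inr (Sum.inl y), Sum.inr (Sum.inl y') => y ≠ y'
  | Sum.inr (Sum.inr (Sum.inl _)), Sum.inr (Sum.inl _) => True
  | Sum.inr (Sum.inl _), Sum.inr (Sum.inr (Sum.inl _)) => True
  | Sum.inr (Sum.inr (Sum.inr _)), Sum.inl _ => True
  | Sum.inl _, Sum.inr (Sum.inr (Sum.inr _)) => True
  | _, _ => False

def auxGraph (s k1 k2 k3 : ℕ) : SimpleGraph (AuxV s k1 k2 k3) where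
  Adj := auxAdj s k1 k2 k3
  symm := by
    constructor; rintro (w | (y | (u | z))) (w' | (y' | (u' | z'))) h <;>
      simp_all [auxAdj] <;> exact fun e => h e.symm
  loopless := by
    constructor; rintro (w | (y | (u | z))) h <;> simp_all [auxAdj]

lemma perfectMatching_of_involution {V : Type*} (G : SimpleGraph V) (f : V → V)
    (hinv : ∀ v, f (f v) = v) (hadj : ∀ v, G.Adj v (f v)) :
    ∃ M : G.Subgraph, M.IsPerfectMatching := by
  refine ⟨{ verts := Set.univ
            Adj := fun a b => b = f a
            adj_sub := by rintro a b rfl; exact hadj a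
            edge_vert := by simp
            symm := by constructor; rintro a b rfl; exact (hinv a).symm }, ?_, fun v => trivial⟩
  intro v _
  exact ⟨f v, rfl, fun w hw => hw⟩

def auxInv (s k1 k2 k3 : ℕ) (hk3 : 1 ≤ k3) : AuxV s k1 k2 k3 → AuxV s k1 k2 k3
  | Sum.inl w =>
      if h : (w : ℕ) < s then Sum.inr (Sum.inl ⟨k1 + 2 * k2 + w, by omega⟩)
      else Sum.inr (Sum.inr (Sum.inr ⟨(w : ℕ) - s, by
        have := w.isLt
        have h2 : s * (k3 - 1) + s = s * k3 := by
          rw [← Nat.mul_succ]; congr 1; omega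
        omega⟩))
  | Sum.inr (Sum.inl y) =>
      if h1 : (y : ℕ) < k1 then Sum.inr (Sum.inr (Sum.inl ⟨y, h1⟩))
      else if h2 : (y : ℕ) < k1 + 2 * k2 then
        Sum.inr (Sum.inl ⟨if ((y : ℕ) - k1) % 2 = 0 then (y : ℕ) + 1 else (y : ℕ) - 1,
          by have := y.isLt; split <;> omega⟩)
      else Sum.inl ⟨(y : ℕ) - (k1 + 2 * k2), by
        have := y.isLt
        have : 1 * s ≤ k3 * s := Nat.mul_le_mul_right s hk3
        have h3 : s ≤ s * k3 := by rw [Nat.mul_comm]; omega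
        omega⟩
  | Sum.inr (Sum.inr (Sum.inl u)) => Sum.inr (Sum.inl ⟨u, by have := u.isLt; omega⟩)
  | Sum.inr (Sum.inr (Sum.inr z)) => Sum.inl ⟨s + z, by
      have := z.isLt
      have h2 : s * (k3 - 1) + s = s * k3 := by
        rw [← Nat.mul_succ]; congr 1; omega
      omega⟩

theorem auxGraph_has_perfect_matching (s k1 k2 k3 : ℕ) (hk3 : 1 ≤ k3) :
    ∃ M : (auxGraph s k1 k2 k3).Subgraph, M.IsPerfectMatching := by
  apply perfectMatching_of_involution _ (auxInv s k1 k2 k3 hk3)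
  · rintro (w | (y | (u | z)))
    · by_cases h : (w : ℕ) < s
      · simp only [auxInv, dif_pos h]
        have hy : ¬ (k1 + 2 * k2 + (w : ℕ) < k1) := by omega
        have hy2 : ¬ (k1 + 2 * k2 + (w : ℕ) < k1 + 2 * k2) := by omega
        simp only [auxInv, dif_neg hy, dif_neg hy2]
        simp only [Sum.inl.injEq, Fin.ext_iff, Fin.val_mk]
        omega
      · simp only [auxInv, dif_neg h]
        have := w.isLt
        simp only [Sum.inl.injEq, Fin.ext_iff, Fin.val_mk]
        omega
    · by_cases h1 : (y : ℕ) < k1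
      · simp only [auxInv, dif_pos h1]
      · by_cases h2 : (y : ℕ) < k1 + 2 * k2
        · simp only [auxInv, dif_neg h1, dif_pos h2]
          by_cases hp : ((y : ℕ) - k1) % 2 = 0
          · simp only [if_pos hp]
            have h1' : ¬ ((y : ℕ) + 1 < k1) := by omega
            have h2' : ((y : ℕ) + 1 < k1 + 2 * k2) := by omega
            simp only [auxInv, dif_neg h1', dif_pos h2']
            have hp' : ¬ (((y : ℕ) + 1 - k1) % 2 = 0) := by omega
            simp only [if_neg hp']
            simp only [Sum.inr.injEq, Sum.inl.injEq, Fin.ext_iff, Fin.val_mk]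
            omega
          · simp only [if_neg hp]
            have h1' : ¬ ((y : ℕ) - 1 < k1) := by omega
            have h2' : ((y : ℕ) - 1 < k1 + 2 * k2) := by omega
            simp only [auxInv, dif_neg h1', dif_pos h2']
            have hp' : (((y : ℕ) - 1 - k1) % 2 = 0) := by omega
            simp only [if_pos hp']
            simp only [Sum.inr.injEq, Sum.inl.injEq, Fin.ext_iff, Fin.val_mk]
            omega
        · simp only [auxInv, dif_neg h1, dif_neg h2]
          have hw : ((y : ℕ) - (k1 + 2 * k2) < s) := by have := y.isLt; omega
          simp only [auxInv, dif_pos hw]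
          simp only [Sum.inr.injEq, Sum.inl.injEq, Fin.ext_iff, Fin.val_mk]
          omega
    · simp only [auxInv]
      have h1 : ((u : ℕ) < k1) := u.isLt
      simp only [dif_pos h1]
    · simp only [auxInv]
      have h : ¬ (s + (z : ℕ) < s) := by omega
      simp only [dif_neg h]
      simp only [Sum.inr.injEq, Sum.inl.injEq, Fin.ext_iff, Fin.val_mk]
      omega
  · rintro (w | (y | (u | z)))
    · by_cases h : (w : ℕ) < s
      · simp only [auxInv, dif_pos h]; exact trivial
      · simp only [auxInv, dif_neg h]; exact trivial
    · by_cases h1 : (y : ℕ) < k1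
      · simp only [auxInv, dif_pos h1]; exact trivial
      · by_cases h2 : (y : ℕ) < k1 + 2 * k2
        · simp only [auxInv, dif_neg h1, dif_pos h2]
          intro he
          have h3 := congrArg Fin.val he
          simp only [Fin.val_mk] at h3
          split at h3 <;> omega
        · simp only [auxInv, dif_neg h1, dif_neg h2]; exact trivial
    · simp only [auxInv]; exact trivial
    · simp only [auxInv]; exact trivial
end
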